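/- arXiv:2605.21705 — 2 statements merged into one kernel-verified Lean document; each statement's English description precedes it below -/
import Mathlib

section
/- Let n ≥ 3, let Ω ⊂ ℝ^n be a bounded open set, let Ψ : Ω → Ω be a C^1 diffeomorphism, and let κ be a continuous positive definite symmetric matrix field on Ω. Then the determinant invariant I(κ) = ∫_Ω (det κ(x))^{1/(n-2)} dx satisfies I(Ψ_*κ) = I(κ), where (Ψ_*κ)(Ψ(x)) = DΨ(x) κ(x) DΨ(x)^T / |det DΨ(x)|. -/
open Matrix MeasureTheory

/-- Invariance of the determinant invariant
`I(κ) = ∫_Ω (det κ)^{1/(n-2)} dx` under pushforward by a `C¹` diffeomorphism of `Ω`. -/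
theorem stmt2 (n : ℕ) (hn : 3 ≤ n) (Ω : Set (Fin n → ℝ)) (hΩo : IsOpen Ω)
    (hΩb : Bornology.IsBounded Ω)
    (Ψ : (Fin n → ℝ) → (Fin n → ℝ))
    (J : (Fin n → ℝ) → Matrix (Fin n) (Fin n) ℝ)
    (κ κ' : (Fin n → ℝ) → Matrix (Fin n) (Fin n) ℝ)
    (hΨ : ∀ x ∈ Ω, HasFDerivAt Ψ ((Matrix.toLin' (J x)).toContinuousLinearMap) x)
    (hJc : ContinuousOn J Ω) (hJ : ∀ x ∈ Ω, IsUnit (J x).det)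
    (hbij : Set.BijOn Ψ Ω Ω)
    (hκc : ContinuousOn κ Ω) (hκpd : ∀ x ∈ Ω, (κ x).PosDef)
    (hκs : ∀ x ∈ Ω, (κ x).IsSymm)
    (hκ'c : ContinuousOn κ' Ω)
    (hpush : ∀ x ∈ Ω, κ' (Ψ x) = |(J x).det|⁻¹ • (J x * κ x * (J x)ᵀ)) :
    ∫ y in Ω, ((κ' y).det) ^ ((1 : ℝ) / ((n : ℝ) - 2))
      = ∫ x in Ω, ((κ x).det) ^ ((1 : ℝ) / ((n : ℝ) - 2)) := by
  have hΩm : MeasurableSet Ω := hΩo.measurableSet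
  have key := MeasureTheory.integral_image_eq_integral_abs_det_fderiv_smul
    (μ := volume) hΩm
    (fun x hx => (hΨ x hx).hasFDerivWithinAt) hbij.injOn
    (fun y => ((κ' y).det) ^ ((1 : ℝ) / ((n : ℝ) - 2)))
  rw [hbij.image_eq] at key
  rw [key]
  apply MeasureTheory.setIntegral_congr_fun hΩm
  intro x hx
  have hdet : ((Matrix.toLin' (J x)).toContinuousLinearMap).det = (J x).det := by
    simp [ContinuousLinearMap.det]
  have hdne : (J x).det ≠ 0 := (isUnit_iff_ne_zero.mp (hJ x hx))
  have ha : (0:ℝ) < |(J x).det| := abs_pos.mpr hdne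
  have hk : 0 < (κ x).det := (hκpd x hx).det_pos
  have hne : (n:ℝ) - 2 ≠ 0 := by
    have : (3:ℝ) ≤ n := by exact_mod_cast hn
    linarith
  set d := (J x).det with hdd
  set a := |d| with haa
  set k := (κ x).det with hkk
  have h1 : (κ' (Ψ x)).det = a ^ (2 - (n:ℝ)) * k := by
    rw [hpush x hx, Matrix.det_smul, Matrix.det_mul, Matrix.det_mul, Matrix.det_transpose]
    have e1 : (a⁻¹) ^ (Fintype.card (Fin n)) = a ^ (-(n:ℝ)) := by
      rw [Fintype.card_fin, Real.rpow_neg ha.le, Real.rpow_natCast, inv_pow]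
    have e2 : d * k * d = a ^ (2:ℝ) * k := by
      rw [Real.rpow_two, sq_abs]
      ring
    rw [e1, e2, ← mul_assoc, ← Real.rpow_add ha]
    ring_nf
  have h2 : (a ^ (2 - (n:ℝ)) * k) ^ ((1:ℝ) / ((n:ℝ) - 2)) = a⁻¹ * k ^ ((1:ℝ) / ((n:ℝ) - 2)) := by
    rw [Real.mul_rpow (Real.rpow_nonneg ha.le _) hk.le, ← Real.rpow_mul ha.le]
    have : (2 - (n:ℝ)) * ((1:ℝ) / ((n:ℝ) - 2)) = -1 := by
      field_simp
      ring
    rw [this, Real.rpow_neg_one]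
  simp only [hdet, h1, h2, smul_eq_mul]
  rw [← mul_assoc, mul_inv_cancel₀ ha.ne', one_mul]
end

section
/- Let Ω ⊂ ℝ^n be open, γ a C^1 symmetric matrix field, c > 0 a C^2 function, λ ∈ ℝ, and f a function, such that the compatibility equation ∇·(γ∇c) + λ(c − 1/c + c f) = 0 holds in Ω. If v ∈ C^2(Ω) solves −∇·(c²γ∇v) = λ v, then z = c v solves −∇·(γ∇z) = λ(1+f) z in Ω. -/
open Matrix

/-- The quantity `∇·(γ∇w)(x)`. -/
noncomputable def matDiv (n : ℕ) (γ : (Fin n → ℝ) → Matrix (Fin n) (Fin n) ℝ)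
    (w : (Fin n → ℝ) → ℝ) (x : Fin n → ℝ) : ℝ :=
  ∑ i, fderiv ℝ
    (fun y => ∑ j, γ y i j * fderiv ℝ w y (Pi.single j 1)) x (Pi.single i 1)

/-- inner field of matDiv -/
noncomputable def mInn (n : ℕ) (γ : (Fin n → ℝ) → Matrix (Fin n) (Fin n) ℝ)
    (w : (Fin n → ℝ) → ℝ) (i : Fin n) (y : Fin n → ℝ) : ℝ :=
  ∑ j, γ y i j * fderiv ℝ w y (Pi.single j 1)

lemma matDiv_eq (n : ℕ) (γ : (Fin n → ℝ) → Matrix (Fin n) (Fin n) ℝ)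
    (w : (Fin n → ℝ) → ℝ) (x : Fin n → ℝ) :
    matDiv n γ w x = ∑ i, fderiv ℝ (mInn n γ w i) x (Pi.single i 1) := rfl

/-- If the compatibility equation
`∇·(γ∇c) + λ(c − 1/c + c f) = 0` holds in `Ω` and `v` solves
`−∇·(c²γ∇v) = λ v`, then `z = c v` solves `−∇·(γ∇z) = λ(1+f) z` in `Ω`. -/
theorem stmt5 (n : ℕ) (Ω : Set (Fin n → ℝ)) (hΩ : IsOpen Ω)
    (γ : (Fin n → ℝ) → Matrix (Fin n) (Fin n) ℝ)
    (hγ : ∀ i j, ContDiffOn ℝ 1 (fun y => γ y i j) Ω)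
    (hγs : ∀ y ∈ Ω, (γ y).IsSymm)
    (c : (Fin n → ℝ) → ℝ) (hc : ContDiffOn ℝ 2 c Ω) (hcpos : ∀ x ∈ Ω, 0 < c x)
    (f : (Fin n → ℝ) → ℝ) (lam : ℝ)
    (hcompat : ∀ x ∈ Ω, matDiv n γ c x + lam * (c x - 1 / c x + c x * f x) = 0)
    (v : (Fin n → ℝ) → ℝ) (hv : ContDiffOn ℝ 2 v Ω)
    (hveq : ∀ x ∈ Ω, -matDiv n (fun y => (c y) ^ 2 • γ y) v x = lam * v x) :
    ∀ x ∈ Ω, -matDiv n γ (fun y => c y * v y) x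
      = lam * (1 + f x) * (c x * v x) := by
  intro x hx
  have hmem : Ω ∈ nhds x := hΩ.mem_nhds hx
  have hcd : ∀ y ∈ Ω, DifferentiableAt ℝ c y := fun y hy =>
    (hc.differentiableOn two_ne_zero).differentiableAt (hΩ.mem_nhds hy)
  have hvd : ∀ y ∈ Ω, DifferentiableAt ℝ v y := fun y hy =>
    (hv.differentiableOn two_ne_zero).differentiableAt (hΩ.mem_nhds hy)
  have hγd : ∀ i j, ∀ y ∈ Ω, DifferentiableAt ℝ (fun t => γ t i j) y := fun i j y hy =>
    ((hγ i j).differentiableOn one_ne_zero).differentiableAt (hΩ.mem_nhds hy)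
  have hc' : ContDiffOn ℝ 1 (fun y => fderiv ℝ c y) Ω := hc.fderiv_of_isOpen hΩ (by norm_num)
  have hv' : ContDiffOn ℝ 1 (fun y => fderiv ℝ v y) Ω := hv.fderiv_of_isOpen hΩ (by norm_num)
  have hDc : ∀ j, ∀ y ∈ Ω, DifferentiableAt ℝ (fun t => fderiv ℝ c t (Pi.single j 1)) y := by
    intro j y hy
    exact ((hc'.clm_apply contDiffOn_const).differentiableOn one_ne_zero).differentiableAt
      (hΩ.mem_nhds hy)
  have hDv : ∀ j, ∀ y ∈ Ω, DifferentiableAt ℝ (fun t => fderiv ℝ v t (Pi.single j 1)) y := by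
    intro j y hy
    exact ((hv'.clm_apply contDiffOn_const).differentiableOn one_ne_zero).differentiableAt
      (hΩ.mem_nhds hy)
  have hAd : ∀ i, ∀ y ∈ Ω, DifferentiableAt ℝ (mInn n γ v i) y := by
    intro i y hy
    exact DifferentiableAt.fun_sum (fun j _ => (hγd i j y hy).mul (hDv j y hy))
  have hBd : ∀ i, ∀ y ∈ Ω, DifferentiableAt ℝ (mInn n γ c i) y := by
    intro i y hy
    exact DifferentiableAt.fun_sum (fun j _ => (hγd i j y hy).mul (hDc j y hy))
  -- product derivative of z = c v
  have hDz : ∀ y ∈ Ω, fderiv ℝ (fun t => c t * v t) y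
      = c y • fderiv ℝ v y + v y • fderiv ℝ c y := fun y hy => fderiv_mul (hcd y hy) (hvd y hy)
  -- inner fields for z
  have hinner : ∀ i, (mInn n γ (fun t => c t * v t) i) =ᶠ[nhds x]
      fun y => c y * mInn n γ v i y + v y * mInn n γ c i y := by
    intro i
    filter_upwards [hmem] with y hy
    unfold mInn
    simp only [hDz y hy, ContinuousLinearMap.add_apply, ContinuousLinearMap.coe_smul',
      Pi.smul_apply, smul_eq_mul]
    rw [Finset.mul_sum, Finset.mul_sum, ← Finset.sum_add_distrib]
    exact Finset.sum_congr rfl fun j _ => by ring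
  -- matDiv of z at x
  have hz : matDiv n γ (fun y => c y * v y) x
      = ∑ i, (fderiv ℝ c x (Pi.single i 1) * mInn n γ v i x
            + c x * fderiv ℝ (mInn n γ v i) x (Pi.single i 1)
            + (fderiv ℝ v x (Pi.single i 1) * mInn n γ c i x
            + v x * fderiv ℝ (mInn n γ c i) x (Pi.single i 1))) := by
    rw [matDiv_eq]
    refine Finset.sum_congr rfl fun i _ => ?_
    rw [(hinner i).fderiv_eq,
      fderiv_fun_add (f := fun y => c y * mInn n γ v i y) (g := fun y => v y * mInn n γ c i y)
        ((hcd x hx).mul (hAd i x hx)) ((hvd x hx).mul (hBd i x hx)),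
      fderiv_fun_mul (hcd x hx) (hAd i x hx), fderiv_fun_mul (hvd x hx) (hBd i x hx)]
    simp only [ContinuousLinearMap.add_apply, ContinuousLinearMap.coe_smul', Pi.smul_apply,
      smul_eq_mul]
    ring
  -- matDiv of v against c² γ
  have hinner2 : ∀ i, (mInn n (fun y => (c y) ^ 2 • γ y) v i)
      = fun y => c y * (c y * mInn n γ v i y) := by
    intro i
    funext y
    unfold mInn
    simp only [Matrix.smul_apply, smul_eq_mul, Finset.mul_sum]
    exact Finset.sum_congr rfl fun j _ => by ring
  have h2 : matDiv n (fun y => (c y) ^ 2 • γ y) v x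
      = ∑ i, (fderiv ℝ c x (Pi.single i 1) * (c x * mInn n γ v i x)
            + c x * (fderiv ℝ c x (Pi.single i 1) * mInn n γ v i x
            + c x * fderiv ℝ (mInn n γ v i) x (Pi.single i 1))) := by
    rw [matDiv_eq]
    refine Finset.sum_congr rfl fun i _ => ?_
    rw [hinner2 i,
      fderiv_fun_mul (d := fun y => c y * mInn n γ v i y) (hcd x hx) ((hcd x hx).mul (hAd i x hx)),
      fderiv_fun_mul (hcd x hx) (hAd i x hx)]
    simp only [ContinuousLinearMap.add_apply, ContinuousLinearMap.coe_smul', Pi.smul_apply,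
      smul_eq_mul]
    ring
  -- symmetry
  have hsym : ∑ i, fderiv ℝ v x (Pi.single i 1) * mInn n γ c i x
      = ∑ i, fderiv ℝ c x (Pi.single i 1) * mInn n γ v i x := by
    unfold mInn
    simp only [Finset.mul_sum]
    rw [Finset.sum_comm]
    refine Finset.sum_congr rfl fun j _ => Finset.sum_congr rfl fun i _ => ?_
    rw [← (hγs x hx).apply j i]
    ring
  have hz' : matDiv n γ (fun y => c y * v y) x
      = (∑ i, fderiv ℝ c x (Pi.single i 1) * mInn n γ v i x) + c x * matDiv n γ v x
      + ((∑ i, fderiv ℝ v x (Pi.single i 1) * mInn n γ c i x) + v x * matDiv n γ c x) := by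
    rw [hz, matDiv_eq n γ v x, matDiv_eq n γ c x, Finset.mul_sum, Finset.mul_sum,
      ← Finset.sum_add_distrib, ← Finset.sum_add_distrib, ← Finset.sum_add_distrib]
  have h2' : matDiv n (fun y => (c y) ^ 2 • γ y) v x
      = 2 * c x * (∑ i, fderiv ℝ c x (Pi.single i 1) * mInn n γ v i x)
        + c x ^ 2 * matDiv n γ v x := by
    rw [h2, matDiv_eq n γ v x, Finset.mul_sum, Finset.mul_sum, ← Finset.sum_add_distrib]
    exact Finset.sum_congr rfl fun i _ => by ring
  have hcne : c x ≠ 0 := (hcpos x hx).ne'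
  have e1 : 2 * c x * (∑ i, fderiv ℝ c x (Pi.single i 1) * mInn n γ v i x)
      + c x ^ 2 * matDiv n γ v x = -(lam * v x) := by
    rw [← h2']; linarith [hveq x hx]
  have e2 : matDiv n γ c x = -(lam * (c x - 1 / c x + c x * f x)) := by
    linarith [hcompat x hx]
  rw [hz', hsym, e2]
  field_simp
  linear_combination -e1
end
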